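/- Let r > 0, λ > 0, α ∈ ℝ, and let (a_ε)_{ε>0} be continuous functions on [0,r] with sup_{ε>0} ∫_0^r |a_ε(u)| du < ∞ and lim_{ε→0} ∫_y^z a_ε(u) du = α·[y = 0] for all 0 ≤ y < z ≤ r. Then for each ε > 0 there is a unique twice continuously differentiable k_ε : [0,r] → ℝ satisfying (1/2)k_ε'' + a_ε k_ε' = λ k_ε on [0,r] with k_ε(0) = 0 and k_ε'(0) = 1; moreover, as ε → 0+, k_ε converges uniformly on [0,r] to the function x ↦ e^{−2α} sinh(√(2λ)·x)/√(2λ), and k_ε'(x) → e^{−2α} cosh(√(2λ)·x) for every x ∈ (0,r]. -/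

import Mathlib

/-!
Writing `P_ε = exp (2 ∫₀ˣ a_ε)`, the problem `(1/2) k'' + a_ε k' = λ k`, `k(0) = 0`, `k'(0) = 1`
is the Volterra equation `k x = ∫₀ˣ (1 + 2λ ∫₀ˢ P_ε k) / P_ε(s) ds`, since `(P_ε k')' = 2λ P_ε k`.
Some iterate of this Volterra operator is a contraction, which gives existence; Grönwall's
inequality gives uniqueness, and more generally stability under perturbations of the operator.

The bound on `∫ |a_ε|` keeps `P_ε` and `1 / P_ε` uniformly bounded, and the hypothesis on the
integrals of `a_ε` gives `P_ε x → e^{2α}` for every `x > 0`, while `P_ε 0 = 1`. By dominated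
convergence the solution of the limit equation, with constant weight `e^{2α}`, solves the
equation with weight `P_ε` up to a defect whose integral tends to `0`; stability turns this into
uniform convergence. The derivative `k_ε' = (1 + 2λ ∫₀ˣ P_ε k_ε) / P_ε` then converges at every
`x > 0`, where `P_ε x` does.
-/

open MeasureTheory Set Filter Topology Real

/-- `SolPK r lam a k` : `k` is a twice continuously differentiable solution on `[0,r]` of
`(1/2)k'' + a k' = λk` with `k(0) = 0` and `k'(0) = 1`. -/
def SolPK (r lam : ℝ) (a k : ℝ → ℝ) : Prop :=
  ContDiffOn ℝ 2 k (Icc 0 r) ∧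
  (∀ x ∈ Icc 0 r,
    (1/2) * derivWithin (derivWithin k (Icc 0 r)) (Icc 0 r) x
      + a x * derivWithin k (Icc 0 r) x = lam * k x) ∧
  k 0 = 0 ∧ derivWithin k (Icc 0 r) 0 = 1

lemma integral_abs_mono {f : ℝ → ℝ} (hf : Continuous f) {x y : ℝ} (hx : 0 ≤ x) (hxy : x ≤ y) :
    ∫ u in (0:ℝ)..x, |f u| ≤ ∫ u in (0:ℝ)..y, |f u| :=
  intervalIntegral.integral_mono_interval le_rfl hx hxy
    (Eventually.of_forall fun _ => abs_nonneg _) (hf.abs.intervalIntegrable _ _)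

lemma abs_integral_le_integral_abs_of_le {f : ℝ → ℝ} (hf : Continuous f) {x y : ℝ}
    (hx : 0 ≤ x) (hxy : x ≤ y) : |∫ u in (0:ℝ)..x, f u| ≤ ∫ u in (0:ℝ)..y, |f u| :=
  (intervalIntegral.abs_integral_le_integral_abs hx).trans (integral_abs_mono hf hx hxy)

lemma ContinuousOn.exists_continuous_eqOn_Icc {α β : Type*} [LinearOrder α] [TopologicalSpace α]
    [OrderTopology α] [TopologicalSpace β] {a b : α} {f : α → β} (hab : a ≤ b)
    (hf : ContinuousOn f (Icc a b)) : ∃ g, Continuous g ∧ EqOn g f (Icc a b) :=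
  ⟨IccExtend hab ((Icc a b).domRestrict f), hf.domRestrict.Icc_extend',
    fun _ hx => IccExtend_of_mem hab _ hx⟩

lemma integral_congr_of_eqOn_Icc {E : Type*} [NormedAddCommGroup E] [NormedSpace ℝ E]
    {f g : ℝ → E} {r x : ℝ} (h : EqOn f g (Icc 0 r)) (hx : x ∈ Icc 0 r) :
    ∫ u in (0:ℝ)..x, f u = ∫ u in (0:ℝ)..x, g u :=
  intervalIntegral.integral_congr fun u hu => by
    rw [uIcc_of_le hx.1] at hu
    exact h ⟨hu.1, hu.2.trans hx.2⟩

lemma eq_add_integral_of_hasDerivWithinAt {f f' : ℝ → ℝ} {r : ℝ}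
    (hf : ∀ x ∈ Icc 0 r, HasDerivWithinAt f (f' x) (Icc 0 r) x) (hf' : ContinuousOn f' (Icc 0 r))
    {x : ℝ} (hx : x ∈ Icc 0 r) : f x = f 0 + ∫ t in (0:ℝ)..x, f' t := by
  have hsub : Icc 0 x ⊆ Icc 0 r := Icc_subset_Icc_right hx.2
  rw [intervalIntegral.integral_eq_sub_of_hasDerivAt_of_le hx.1
    (fun t ht => (hf t (hsub ht)).continuousWithinAt.mono hsub)
    (fun t ht => (hf t (hsub (Ioo_subset_Icc_self ht))).hasDerivAt
      (Icc_mem_nhds ht.1 (ht.2.trans_le hx.2)))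
    ((hf'.mono hsub).intervalIntegrable_of_Icc hx.1)]
  ring

theorem abs_le_mul_exp_of_abs_le_add_integral {r A B : ℝ} (hA : 0 ≤ A) (hB : 0 ≤ B)
    {v : ℝ → ℝ} (hv : Continuous v)
    (h : ∀ x ∈ Icc 0 r, |v x| ≤ A + B * ∫ u in (0:ℝ)..x, |v u|) :
    ∀ x ∈ Icc 0 r, |v x| ≤ A * exp (B * r) := by
  set F : ℝ → ℝ := fun x => A + B * ∫ u in (0:ℝ)..x, |v u|
  have hF : ∀ x, HasDerivAt F (B * |v x|) x := fun x =>
    ((hv.abs.integral_hasStrictDerivAt 0 x).hasDerivAt.const_mul B).const_add A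
  have hF_nonneg : ∀ x ∈ Icc 0 r, 0 ≤ F x := fun x hx =>
    add_nonneg hA (mul_nonneg hB (intervalIntegral.integral_nonneg hx.1 fun u _ => abs_nonneg _))
  -- `F' = B |v| ≤ B F`, so Grönwall's inequality applies to `F` itself.
  have hgron := norm_le_gronwallBound_of_norm_deriv_right_le (f := F) (δ := A) (K := B) (ε := 0)
    (a := 0) (b := r)
    (fun x _ => (hF x).continuousAt.continuousWithinAt) (fun x _ => (hF x).hasDerivWithinAt)
    (by simp [F, abs_of_nonneg hA]) fun x hx => by
      rw [Real.norm_eq_abs, Real.norm_eq_abs, abs_of_nonneg (mul_nonneg hB (abs_nonneg _)),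
        abs_of_nonneg (hF_nonneg x (Ico_subset_Icc_self hx)), add_zero]
      exact mul_le_mul_of_nonneg_left (h x (Ico_subset_Icc_self hx)) hB
  intro x hx
  calc |v x| ≤ ‖F x‖ := (h x hx).trans (le_abs_self _)
    _ ≤ A * exp (B * x) := by simpa [gronwallBound_ε0] using hgron x hx
    _ ≤ A * exp (B * r) := by gcongr; exact hx.2

open scoped Nat

section VolterraFixedPoint

variable {r L : ℝ}

lemma dist_iterate_apply_le_of_volterra (hr : 0 ≤ r) (hL : 0 ≤ L)
    {T : C(Icc 0 r, ℝ) → C(Icc 0 r, ℝ)}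
    (hT : ∀ f g x, |T f x - T g x| ≤ L * ∫ u in (0:ℝ)..x, |IccExtend hr f u - IccExtend hr g u|)
    (n : ℕ) (f g : C(Icc 0 r, ℝ)) (x : Icc 0 r) :
    |T^[n] f x - T^[n] g x| ≤ (L * x) ^ n / n ! * dist f g := by
  induction n generalizing x with
  | zero => simpa [← Real.dist_eq] using ContinuousMap.dist_apply_le_dist x
  | succ n ih =>
    rw [Function.iterate_succ_apply', Function.iterate_succ_apply']
    have hx : (0:ℝ) ≤ x := x.2.1
    have hint : ∫ u in (0:ℝ)..x, |IccExtend hr (T^[n] f) u - IccExtend hr (T^[n] g) u|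
        ≤ ∫ u in (0:ℝ)..x, (L * u) ^ n / n ! * dist f g := by
      refine intervalIntegral.integral_mono_on hx ?_
        ((by fun_prop : Continuous fun u : ℝ => (L * u) ^ n / n ! * dist f g).intervalIntegrable
          _ _) fun u hu => ?_
      · exact (((T^[n] f).continuous.Icc_extend').sub (T^[n] g).continuous.Icc_extend').abs
          |>.intervalIntegrable _ _
      · have hu' : u ∈ Icc 0 r := ⟨hu.1, hu.2.trans x.2.2⟩
        simpa [IccExtend_of_mem hr _ hu'] using ih ⟨u, hu'⟩
    have hcalc : ∫ u in (0:ℝ)..x, (L * u) ^ n / n ! * dist f g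
        = L ^ n * x ^ (n + 1) / (n + 1) ! * dist f g := by
      simp only [mul_pow, intervalIntegral.integral_mul_const, intervalIntegral.integral_div,
        intervalIntegral.integral_const_mul, integral_pow, Nat.factorial_succ]
      push_cast
      field_simp
      ring
    calc _ ≤ L * ∫ u in (0:ℝ)..x, (L * u) ^ n / n ! * dist f g :=
          (hT _ _ x).trans (mul_le_mul_of_nonneg_left hint hL)
      _ = (L * x) ^ (n + 1) / (n + 1) ! * dist f g := by rw [hcalc]; ring

theorem exists_isFixedPt_of_volterra (hr : 0 ≤ r) (hL : 0 ≤ L)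
    {T : C(Icc 0 r, ℝ) → C(Icc 0 r, ℝ)}
    (hT : ∀ f g x, |T f x - T g x| ≤ L * ∫ u in (0:ℝ)..x, |IccExtend hr f u - IccExtend hr g u|) :
    ∃ f, Function.IsFixedPt T f := by
  have hdist : ∀ n f g, dist (T^[n] f) (T^[n] g) ≤ (L * r) ^ n / n ! * dist f g := fun n f g =>
    (ContinuousMap.dist_le (by positivity)).2 fun x =>
      (dist_iterate_apply_le_of_volterra hr hL hT n f g x).trans <| by
        gcongr
        exacts [mul_nonneg hL x.2.1, x.2.2]
  obtain ⟨n, hn⟩ := ((FloorSemiring.tendsto_pow_div_factorial_atTop (L * r)).eventually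
    (gt_mem_nhds one_pos)).exists
  have hcontr : ContractingWith ⟨(L * r) ^ n / n !, by positivity⟩ T^[n] :=
    ⟨hn, LipschitzWith.of_dist_le_mul (hdist n)⟩
  exact ⟨_, hcontr.isFixedPt_fixedPoint_iterate⟩

theorem exists_continuous_eqOn_of_volterra (hr : 0 ≤ r) (hL : 0 ≤ L) {W : (ℝ → ℝ) → ℝ → ℝ}
    (hWc : ∀ k, Continuous k → Continuous (W k))
    (hW : ∀ k₁ k₂, Continuous k₁ → Continuous k₂ → ∀ x ∈ Icc 0 r,
      |W k₁ x - W k₂ x| ≤ L * ∫ u in (0:ℝ)..x, |k₁ u - k₂ u|) :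
    ∃ k, Continuous k ∧ EqOn k (W k) (Icc 0 r) := by
  let T : C(Icc 0 r, ℝ) → C(Icc 0 r, ℝ) := fun f =>
    ⟨fun x => W (IccExtend hr f) x, (hWc _ f.continuous.Icc_extend').comp continuous_subtype_val⟩
  obtain ⟨f, hf⟩ := exists_isFixedPt_of_volterra hr hL (T := T) fun f g x =>
    hW _ _ f.continuous.Icc_extend' g.continuous.Icc_extend' x x.2
  refine ⟨IccExtend hr f, f.continuous.Icc_extend', fun x hx => ?_⟩
  rw [IccExtend_of_mem hr _ hx]
  exact (congrArg (· ⟨x, hx⟩) hf).symm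

end VolterraFixedPoint

structure IsBoundedWeight (r C : ℝ) (p : ℝ → ℝ) : Prop where
  continuous : Continuous p
  pos : ∀ x, 0 < p x
  le : ∀ x ∈ Icc 0 r, p x ≤ C
  inv_le : ∀ x ∈ Icc 0 r, (p x)⁻¹ ≤ C

noncomputable def volterraIntegrand (lam : ℝ) (p k : ℝ → ℝ) (s : ℝ) : ℝ :=
  (1 + 2 * lam * ∫ u in (0:ℝ)..s, p u * k u) / p s

noncomputable def volterra (lam : ℝ) (p k : ℝ → ℝ) (x : ℝ) : ℝ :=
  ∫ s in (0:ℝ)..x, volterraIntegrand lam p k s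

section Volterra

variable {r lam C : ℝ} {p k k₁ k₂ : ℝ → ℝ}

lemma continuous_volterraIntegrand (hp : Continuous p) (hp0 : ∀ x, p x ≠ 0) (hk : Continuous k) :
    Continuous (volterraIntegrand lam p k) :=
  (continuous_const.add (continuous_const.mul (intervalIntegral.continuous_primitive
    (fun _ _ => (hp.mul hk).intervalIntegrable _ _) 0))).div hp hp0

lemma IsBoundedWeight.continuous_volterraIntegrand (hp : IsBoundedWeight r C p)
    (hk : Continuous k) : Continuous (volterraIntegrand lam p k) :=
  _root_.continuous_volterraIntegrand hp.continuous (fun x => (hp.pos x).ne') hk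

lemma hasDerivAt_volterra (hp : Continuous p) (hp0 : ∀ x, p x ≠ 0) (hk : Continuous k) (x : ℝ) :
    HasDerivAt (volterra lam p k) (volterraIntegrand lam p k x) x :=
  ((continuous_volterraIntegrand hp hp0 hk).integral_hasStrictDerivAt 0 x).hasDerivAt

lemma continuous_volterra (hp : Continuous p) (hp0 : ∀ x, p x ≠ 0) (hk : Continuous k) :
    Continuous (volterra lam p k) :=
  continuous_iff_continuousAt.2 fun x => (hasDerivAt_volterra hp hp0 hk x).continuousAt

lemma volterraIntegrand_sub (hp : Continuous p) (hk₁ : Continuous k₁) (hk₂ : Continuous k₂)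
    (s : ℝ) : volterraIntegrand lam p k₁ s - volterraIntegrand lam p k₂ s
      = 2 * lam * (∫ u in (0:ℝ)..s, p u * (k₁ u - k₂ u)) / p s := by
  have hsub : ∫ u in (0:ℝ)..s, p u * (k₁ u - k₂ u)
      = (∫ u in (0:ℝ)..s, p u * k₁ u) - ∫ u in (0:ℝ)..s, p u * k₂ u := by
    simp only [mul_sub]
    exact intervalIntegral.integral_sub ((hp.mul hk₁).intervalIntegrable 0 s)
      ((hp.mul hk₂).intervalIntegrable 0 s)
  rw [volterraIntegrand, volterraIntegrand, hsub]
  ring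

lemma volterra_congr (h : EqOn k₁ k₂ (Icc 0 r)) :
    EqOn (volterra lam p k₁) (volterra lam p k₂) (Icc 0 r) := fun _ hx =>
  integral_congr_of_eqOn_Icc (fun s hs => by
    rw [volterraIntegrand, volterraIntegrand, integral_congr_of_eqOn_Icc
      (f := fun u => p u * k₁ u) (g := fun u => p u * k₂ u) (fun u hu => by simp only [h hu]) hs])
    hx

lemma abs_volterraIntegrand_sub_le (hlam : 0 ≤ lam) (hp : IsBoundedWeight r C p)
    (hk₁ : Continuous k₁) (hk₂ : Continuous k₂) {s : ℝ} (hs : s ∈ Icc 0 r) :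
    |volterraIntegrand lam p k₁ s - volterraIntegrand lam p k₂ s|
      ≤ 2 * lam * C ^ 2 * ∫ u in (0:ℝ)..s, |k₁ u - k₂ u| := by
  have hC : 0 ≤ C := (hp.pos s).le.trans (hp.le s hs)
  have hint : |∫ u in (0:ℝ)..s, p u * (k₁ u - k₂ u)| ≤ C * ∫ u in (0:ℝ)..s, |k₁ u - k₂ u| := by
    rw [← intervalIntegral.integral_const_mul]
    refine (intervalIntegral.abs_integral_le_integral_abs hs.1).trans
      (intervalIntegral.integral_mono_on hs.1 ?_ ?_ fun u hu => ?_)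
    · exact (hp.continuous.mul (hk₁.sub hk₂)).abs.intervalIntegrable _ _
    · exact (continuous_const.mul (hk₁.sub hk₂).abs).intervalIntegrable _ _
    · rw [abs_mul, abs_of_pos (hp.pos u)]
      exact mul_le_mul_of_nonneg_right (hp.le u ⟨hu.1, hu.2.trans hs.2⟩) (abs_nonneg _)
  rw [volterraIntegrand_sub hp.continuous hk₁ hk₂, abs_div, abs_mul,
    abs_of_nonneg (by positivity : (0:ℝ) ≤ 2 * lam), abs_of_pos (hp.pos s), div_eq_mul_inv]
  calc 2 * lam * |∫ u in (0:ℝ)..s, p u * (k₁ u - k₂ u)| * (p s)⁻¹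
      ≤ 2 * lam * (C * ∫ u in (0:ℝ)..s, |k₁ u - k₂ u|) * C := by
        have := hp.inv_le s hs
        have := inv_nonneg.2 (hp.pos s).le
        have : 0 ≤ ∫ u in (0:ℝ)..s, |k₁ u - k₂ u| :=
          intervalIntegral.integral_nonneg hs.1 fun u _ => abs_nonneg _
        gcongr
    _ = 2 * lam * C ^ 2 * ∫ u in (0:ℝ)..s, |k₁ u - k₂ u| := by ring

lemma abs_volterra_sub_le (hlam : 0 ≤ lam) (hp : IsBoundedWeight r C p)
    (hk₁ : Continuous k₁) (hk₂ : Continuous k₂) {x : ℝ} (hx : x ∈ Icc 0 r) :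
    |volterra lam p k₁ x - volterra lam p k₂ x|
      ≤ 2 * lam * C ^ 2 * r * ∫ u in (0:ℝ)..x, |k₁ u - k₂ u| := by
  have hI : 0 ≤ 2 * lam * C ^ 2 * ∫ u in (0:ℝ)..x, |k₁ u - k₂ u| :=
    mul_nonneg (by positivity) (intervalIntegral.integral_nonneg hx.1 fun _ _ => abs_nonneg _)
  rw [volterra, volterra, ← intervalIntegral.integral_sub
    ((hp.continuous_volterraIntegrand hk₁).intervalIntegrable _ _)
    ((hp.continuous_volterraIntegrand hk₂).intervalIntegrable _ _)]
  calc _ ≤ (2 * lam * C ^ 2 * ∫ u in (0:ℝ)..x, |k₁ u - k₂ u|) * |x - 0| := by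
        refine intervalIntegral.norm_integral_le_of_norm_le_const
          (f := fun s => volterraIntegrand lam p k₁ s - volterraIntegrand lam p k₂ s)
          (C := 2 * lam * C ^ 2 * ∫ u in (0:ℝ)..x, |k₁ u - k₂ u|) fun s hs => ?_
        rw [uIoc_of_le hx.1] at hs
        refine (abs_volterraIntegrand_sub_le hlam hp hk₁ hk₂ ⟨hs.1.le, hs.2.trans hx.2⟩).trans ?_
        gcongr
        exact integral_abs_mono (hk₁.sub hk₂) hs.1.le hs.2
    _ ≤ (2 * lam * C ^ 2 * ∫ u in (0:ℝ)..x, |k₁ u - k₂ u|) * r := by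
        rw [sub_zero, abs_of_nonneg hx.1]
        exact mul_le_mul_of_nonneg_left hx.2 hI
    _ = _ := by ring

lemma abs_volterraIntegrand_le (hlam : 0 ≤ lam) (hp : IsBoundedWeight r C p)
    {B : ℝ} (hB : ∀ u ∈ Icc 0 r, |k u| ≤ B) {s : ℝ} (hs : s ∈ Icc 0 r) :
    |volterraIntegrand lam p k s| ≤ (1 + 2 * lam * (C * B * r)) * C := by
  have hC : 0 ≤ C := (hp.pos s).le.trans (hp.le s hs)
  have hint : |∫ u in (0:ℝ)..s, p u * k u| ≤ C * B * r := by
    refine (intervalIntegral.norm_integral_le_of_norm_le_const (f := fun u => p u * k u)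
      (C := C * B) fun u hu => ?_).trans ?_
    · rw [uIoc_of_le hs.1] at hu
      have hu' : u ∈ Icc 0 r := ⟨hu.1.le, hu.2.trans hs.2⟩
      rw [Real.norm_eq_abs, abs_mul, abs_of_pos (hp.pos u)]
      exact mul_le_mul (hp.le u hu') (hB u hu') (abs_nonneg _) hC
    · rw [sub_zero, abs_of_nonneg hs.1]
      exact mul_le_mul_of_nonneg_left hs.2 (mul_nonneg hC ((abs_nonneg _).trans (hB s hs)))
  have hnum : |1 + 2 * lam * ∫ u in (0:ℝ)..s, p u * k u| ≤ 1 + 2 * lam * (C * B * r) :=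
    calc |1 + 2 * lam * ∫ u in (0:ℝ)..s, p u * k u|
        ≤ 1 + 2 * lam * |∫ u in (0:ℝ)..s, p u * k u| := by
          refine (abs_add_le _ _).trans ?_
          rw [abs_one, abs_mul, abs_of_nonneg (by positivity : (0:ℝ) ≤ 2 * lam)]
      _ ≤ 1 + 2 * lam * (C * B * r) := by gcongr
  rw [volterraIntegrand, abs_div, abs_of_pos (hp.pos s), div_eq_mul_inv]
  exact mul_le_mul hnum (hp.inv_le s hs) (inv_nonneg.2 (hp.pos s).le)
    ((abs_nonneg _).trans hnum)

theorem exists_continuous_eqOn_volterra (hr : 0 ≤ r) (hlam : 0 ≤ lam)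
    (hp : IsBoundedWeight r C p) : ∃ k, Continuous k ∧ EqOn k (volterra lam p k) (Icc 0 r) :=
  exists_continuous_eqOn_of_volterra hr (mul_nonneg (by positivity) hr)
    (fun _ hk => continuous_volterra hp.continuous (fun x => (hp.pos x).ne') hk)
    fun _ _ hk₁ hk₂ _ hx => abs_volterra_sub_le hlam hp hk₁ hk₂ hx

theorem abs_sub_le_of_eqOn_volterra (hr : 0 ≤ r) (hlam : 0 ≤ lam) (hp : IsBoundedWeight r C p)
    (hk : Continuous k) (hkW : EqOn k (volterra lam p k) (Icc 0 r)) {h g : ℝ → ℝ}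
    (hh : Continuous h) (hg : Continuous g) (hhg : ∀ x ∈ Icc 0 r, h x = ∫ s in (0:ℝ)..x, g s) :
    ∀ x ∈ Icc 0 r, |k x - h x|
      ≤ (∫ s in (0:ℝ)..r, |volterraIntegrand lam p h s - g s|) * exp (2 * lam * C ^ 2 * r * r) := by
  have hD : Continuous fun s => volterraIntegrand lam p h s - g s :=
    (hp.continuous_volterraIntegrand hh).sub hg
  refine abs_le_mul_exp_of_abs_le_add_integral
    (intervalIntegral.integral_nonneg hr fun _ _ => abs_nonneg _) (mul_nonneg (by positivity) hr)
    (hk.sub hh) fun x hx => ?_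
  have hsplit : k x - h x = (volterra lam p k x - volterra lam p h x)
      + ∫ s in (0:ℝ)..x, (volterraIntegrand lam p h s - g s) := by
    rw [intervalIntegral.integral_sub ((hp.continuous_volterraIntegrand hh).intervalIntegrable 0 x)
      (hg.intervalIntegrable 0 x),
      ← hkW hx, ← hhg x hx, volterra]
    ring
  rw [hsplit, add_comm]
  exact (abs_add_le _ _).trans (add_le_add (abs_integral_le_integral_abs_of_le hD hx.1 hx.2)
    (abs_volterra_sub_le hlam hp hk hh hx))

theorem eqOn_of_eqOn_volterra (hr : 0 ≤ r) (hlam : 0 ≤ lam) (hp : IsBoundedWeight r C p)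
    (hk₁ : Continuous k₁) (h₁ : EqOn k₁ (volterra lam p k₁) (Icc 0 r))
    (hk₂ : Continuous k₂) (h₂ : EqOn k₂ (volterra lam p k₂) (Icc 0 r)) :
    EqOn k₁ k₂ (Icc 0 r) := fun x hx => by
  have h := abs_sub_le_of_eqOn_volterra hr hlam hp hk₁ h₁ hk₂
    (hp.continuous_volterraIntegrand hk₂) h₂ x hx
  simp only [sub_self, abs_zero, intervalIntegral.integral_zero, zero_mul] at h
  exact sub_eq_zero.1 (abs_nonpos_iff.1 h)

end Volterra

section Convergence

variable {ι : Type*} {l : Filter ι} [l.IsCountablyGenerated] {r lam C C₀ : ℝ}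
  {p : ι → ℝ → ℝ} {p₀ k₀ : ℝ → ℝ}

lemma tendsto_volterraIntegrand (hp : ∀ᶠ i in l, IsBoundedWeight r C (p i))
    (hlim : ∀ x ∈ Ioc 0 r, Tendsto (fun i => p i x) l (𝓝 (p₀ x))) (hk : Continuous k₀)
    {s : ℝ} (hs : s ∈ Ioc 0 r) (hs₀ : p₀ s ≠ 0) :
    Tendsto (fun i => volterraIntegrand lam (p i) k₀ s) l (𝓝 (volterraIntegrand lam p₀ k₀ s)) := by
  obtain ⟨B, hB⟩ := (isCompact_Icc (a := (0:ℝ)) (b := r)).exists_bound_of_continuousOn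
    hk.continuousOn
  have hinner : Tendsto (fun i => ∫ u in (0:ℝ)..s, p i u * k₀ u) l
      (𝓝 (∫ u in (0:ℝ)..s, p₀ u * k₀ u)) := by
    refine intervalIntegral.tendsto_integral_filter_of_dominated_convergence (fun _ => C * B)
      (hp.mono fun i hi => (hi.continuous.mul hk).aestronglyMeasurable) ?_
      intervalIntegrable_const (Eventually.of_forall fun u hu => ?_)
    · filter_upwards [hp] with i hi
      refine Eventually.of_forall fun u hu => ?_
      rw [uIoc_of_le hs.1.le] at hu
      have hu' : u ∈ Icc 0 r := ⟨hu.1.le, hu.2.trans hs.2⟩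
      rw [norm_mul, Real.norm_of_nonneg (hi.pos u).le]
      exact mul_le_mul (hi.le u hu') (hB u hu') (norm_nonneg _)
        ((hi.pos u).le.trans (hi.le u hu'))
    · rw [uIoc_of_le hs.1.le] at hu
      exact (hlim u ⟨hu.1, hu.2.trans hs.2⟩).mul_const _
  exact (tendsto_const_nhds.add (hinner.const_mul _)).div (hlim s hs) hs₀

lemma tendsto_integral_abs_volterraIntegrand_sub (hr : 0 ≤ r) (hlam : 0 ≤ lam)
    (hp : ∀ᶠ i in l, IsBoundedWeight r C (p i)) (hp₀ : IsBoundedWeight r C₀ p₀)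
    (hlim : ∀ x ∈ Ioc 0 r, Tendsto (fun i => p i x) l (𝓝 (p₀ x))) (hk : Continuous k₀) :
    Tendsto (fun i => ∫ s in (0:ℝ)..r, |volterraIntegrand lam (p i) k₀ s
      - volterraIntegrand lam p₀ k₀ s|) l (𝓝 0) := by
  obtain ⟨B, hB⟩ := (isCompact_Icc (a := (0:ℝ)) (b := r)).exists_bound_of_continuousOn
    hk.continuousOn
  rw [show 𝓝 (0:ℝ) = 𝓝 (∫ _ in (0:ℝ)..r, (0:ℝ)) by simp]
  refine intervalIntegral.tendsto_integral_filter_of_dominated_convergence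
    (fun _ => (1 + 2 * lam * (C * B * r)) * C + (1 + 2 * lam * (C₀ * B * r)) * C₀)
    (hp.mono fun i hi => ((hi.continuous_volterraIntegrand hk).sub
      (hp₀.continuous_volterraIntegrand hk)).abs.aestronglyMeasurable)
    ?_ intervalIntegrable_const (Eventually.of_forall fun s hs => ?_)
  · filter_upwards [hp] with i hi
    refine Eventually.of_forall fun s hs => ?_
    rw [uIoc_of_le hr] at hs
    have hs' : s ∈ Icc 0 r := ⟨hs.1.le, hs.2⟩
    rw [Real.norm_eq_abs, abs_abs]
    exact (abs_sub _ _).trans (add_le_add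
      (abs_volterraIntegrand_le hlam hi (fun u hu => by simpa using hB u hu) hs')
      (abs_volterraIntegrand_le hlam hp₀ (fun u hu => by simpa using hB u hu) hs'))
  · rw [uIoc_of_le hr] at hs
    simpa using ((tendsto_volterraIntegrand (lam := lam) hp hlim hk hs (hp₀.pos s).ne').sub_const
      (volterraIntegrand lam p₀ k₀ s)).abs

theorem tendstoUniformlyOn_of_eqOn_volterra (hr : 0 ≤ r) (hlam : 0 ≤ lam)
    (hp : ∀ᶠ i in l, IsBoundedWeight r C (p i)) (hp₀ : IsBoundedWeight r C₀ p₀)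
    (hlim : ∀ x ∈ Ioc 0 r, Tendsto (fun i => p i x) l (𝓝 (p₀ x))) {k : ι → ℝ → ℝ}
    (hk : ∀ᶠ i in l, Continuous (k i) ∧ EqOn (k i) (volterra lam (p i) (k i)) (Icc 0 r))
    (hk₀ : Continuous k₀) (hk₀W : EqOn k₀ (volterra lam p₀ k₀) (Icc 0 r)) :
    TendstoUniformlyOn k k₀ l (Icc 0 r) := by
  have hρ := (tendsto_integral_abs_volterraIntegrand_sub hr hlam hp hp₀ hlim hk₀).mul_const
    (exp (2 * lam * C ^ 2 * r * r))
  rw [zero_mul] at hρ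
  refine Metric.tendstoUniformlyOn_iff.2 fun δ hδ => ?_
  filter_upwards [hp, hk, hρ.eventually (gt_mem_nhds hδ)] with i hpi ⟨hki, hkiW⟩ hδi x hx
  rw [dist_comm, Real.dist_eq]
  exact (abs_sub_le_of_eqOn_volterra hr hlam hpi hki hkiW hk₀
    (hp₀.continuous_volterraIntegrand hk₀) hk₀W x hx).trans_lt hδi

theorem tendsto_volterraIntegrand_of_tendstoUniformlyOn (hlam : 0 ≤ lam)
    (hp : ∀ᶠ i in l, IsBoundedWeight r C (p i))
    (hlim : ∀ x ∈ Ioc 0 r, Tendsto (fun i => p i x) l (𝓝 (p₀ x))) {k : ι → ℝ → ℝ}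
    (hk : ∀ᶠ i in l, Continuous (k i)) (hk₀ : Continuous k₀)
    (hunif : TendstoUniformlyOn k k₀ l (Icc 0 r)) {x : ℝ} (hx : x ∈ Ioc 0 r) (hx₀ : p₀ x ≠ 0) :
    Tendsto (fun i => volterraIntegrand lam (p i) (k i) x) l
      (𝓝 (volterraIntegrand lam p₀ k₀ x)) := by
  have hsub : uIcc 0 x ⊆ Icc 0 r := by
    rw [uIcc_of_le hx.1.le]
    exact Icc_subset_Icc_right hx.2
  have habs : TendstoUniformlyOn (fun i u => |k i u - k₀ u|) 0 l (uIcc 0 x) := by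
    refine Metric.tendstoUniformlyOn_iff.2 fun δ hδ => ?_
    filter_upwards [Metric.tendstoUniformlyOn_iff.1 hunif δ hδ] with i hi u hu
    rw [Pi.zero_apply, dist_zero_left, Real.norm_eq_abs, abs_abs, abs_sub_comm, ← Real.dist_eq]
    exact hi u (hsub hu)
  have hint := habs.tendsto_intervalIntegral_of_continuousOn (μ := volume)
    (hk.mono fun i hi => ((hi.sub hk₀).abs).continuousOn)
  simp only [Pi.zero_apply, intervalIntegral.integral_zero] at hint
  have hdiff : Tendsto (fun i => volterraIntegrand lam (p i) (k i) x
      - volterraIntegrand lam (p i) k₀ x) l (𝓝 0) := by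
    refine squeeze_zero_norm' ?_ (by simpa using hint.const_mul (2 * lam * C ^ 2))
    filter_upwards [hp, hk] with i hpi hki
    exact abs_volterraIntegrand_sub_le hlam hpi hki hk₀ ⟨hx.1.le, hx.2⟩
  simpa using hdiff.add (tendsto_volterraIntegrand (lam := lam) hp hlim hk₀ hx hx₀)

end Convergence

lemma SolPK.congr_coeff {r lam : ℝ} {a b k : ℝ → ℝ} (hk : SolPK r lam a k)
    (hab : EqOn a b (Icc 0 r)) : SolPK r lam b k :=
  ⟨hk.1, fun x hx => hab hx ▸ hk.2.1 x hx, hk.2.2⟩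

noncomputable def integratingFactor (b : ℝ → ℝ) (x : ℝ) : ℝ := exp (2 * ∫ t in (0:ℝ)..x, b t)

section IntegratingFactor

variable {r lam : ℝ} {b k : ℝ → ℝ}

lemma hasDerivAt_integratingFactor (hb : Continuous b) (x : ℝ) :
    HasDerivAt (integratingFactor b) (integratingFactor b x * (2 * b x)) x :=
  ((hb.integral_hasStrictDerivAt 0 x).hasDerivAt.const_mul 2).exp

lemma continuous_integratingFactor (hb : Continuous b) : Continuous (integratingFactor b) :=
  continuous_iff_continuousAt.2 fun x => (hasDerivAt_integratingFactor hb x).continuousAt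

lemma isBoundedWeight_integratingFactor (hb : Continuous b) {M : ℝ}
    (hM : ∫ t in (0:ℝ)..r, |b t| ≤ M) : IsBoundedWeight r (exp (2 * M)) (integratingFactor b) where
  continuous := continuous_integratingFactor hb
  pos _ := exp_pos _
  le x hx := by
    have := (abs_integral_le_integral_abs_of_le hb hx.1 hx.2).trans hM
    exact exp_le_exp.2 (by linarith [le_abs_self (∫ t in (0:ℝ)..x, b t)])
  inv_le x hx := by
    have := (abs_integral_le_integral_abs_of_le hb hx.1 hx.2).trans hM
    rw [integratingFactor, ← exp_neg]
    exact exp_le_exp.2 (by linarith [neg_abs_le (∫ t in (0:ℝ)..x, b t)])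

lemma hasDerivAt_volterraIntegrand_integratingFactor (hb : Continuous b) (hk : Continuous k)
    (x : ℝ) : HasDerivAt (volterraIntegrand lam (integratingFactor b) k)
      (2 * lam * k x - 2 * b x * volterraIntegrand lam (integratingFactor b) k x) x := by
  have hp := continuous_integratingFactor hb
  have hflux : HasDerivAt (fun s => 1 + 2 * lam * ∫ u in (0:ℝ)..s, integratingFactor b u * k u)
      (2 * lam * (integratingFactor b x * k x)) x :=
    (((hp.mul hk).integral_hasStrictDerivAt 0 x).hasDerivAt.const_mul _).const_add 1
  refine (hflux.div (hasDerivAt_integratingFactor hb x) (exp_pos _).ne').congr_deriv ?_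
  have : integratingFactor b x ≠ 0 := (exp_pos _).ne'
  simp only [volterraIntegrand]
  field_simp

theorem solPK_of_eqOn_volterra (hr : 0 < r) (hb : Continuous b) (hk : Continuous k)
    (hkW : EqOn k (volterra lam (integratingFactor b) k) (Icc 0 r)) :
    SolPK r lam b k ∧
      EqOn (derivWithin k (Icc 0 r)) (volterraIntegrand lam (integratingFactor b) k) (Icc 0 r) := by
  set p := integratingFactor b
  set q := volterraIntegrand lam p k
  have hu : UniqueDiffOn ℝ (Icc 0 r) := uniqueDiffOn_Icc hr
  have hp := continuous_integratingFactor hb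
  have hp0 : ∀ x, p x ≠ 0 := fun x => (exp_pos _).ne'
  have hW : ∀ x, HasDerivAt (volterra lam p k) (q x) x := hasDerivAt_volterra hp hp0 hk
  have hq : ∀ x, HasDerivAt q (2 * lam * k x - 2 * b x * q x) x :=
    hasDerivAt_volterraIntegrand_integratingFactor hb hk
  have hk' : EqOn (derivWithin k (Icc 0 r)) q (Icc 0 r) := fun x hx => by
    rw [derivWithin_congr hkW (hkW hx)]
    exact (hW x).hasDerivWithinAt.derivWithin (hu x hx)
  have hk'' : ∀ x ∈ Icc 0 r, derivWithin (derivWithin k (Icc 0 r)) (Icc 0 r) x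
      = 2 * lam * k x - 2 * b x * q x := fun x hx => by
    rw [derivWithin_congr hk' (hk' hx)]
    exact (hq x).hasDerivWithinAt.derivWithin (hu x hx)
  have hWcd : ContDiff ℝ 2 (volterra lam p k) := by
    rw [show (2 : WithTop ℕ∞) = 1 + 1 from rfl, contDiff_succ_iff_deriv]
    refine ⟨fun x => (hW x).differentiableAt, by simp, ?_⟩
    rw [funext fun x => (hW x).deriv, contDiff_one_iff_deriv, funext fun x => (hq x).deriv]
    have hqc : Continuous q := continuous_volterraIntegrand hp hp0 hk
    exact ⟨fun x => (hq x).differentiableAt, by fun_prop⟩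
  have h0 : (0:ℝ) ∈ Icc 0 r := left_mem_Icc.2 hr.le
  refine ⟨⟨hWcd.contDiffOn.congr hkW, fun x hx => ?_, ?_, ?_⟩, hk'⟩
  · rw [hk' hx, hk'' x hx]
    ring
  · rw [hkW h0, volterra, intervalIntegral.integral_same]
  · rw [hk' h0]
    simp [q, volterraIntegrand, p, integratingFactor]

theorem eqOn_volterra_of_solPK (hr : 0 < r) (hb : Continuous b) (hk : SolPK r lam b k) :
    EqOn k (volterra lam (integratingFactor b) k) (Icc 0 r) := by
  obtain ⟨hcd, hode, h0, h1⟩ := hk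
  set p := integratingFactor b
  set D := derivWithin k (Icc 0 r)
  have hu : UniqueDiffOn ℝ (Icc 0 r) := uniqueDiffOn_Icc hr
  have hDcd : ContDiffOn ℝ 1 D (Icc 0 r) := hcd.derivWithin hu (by norm_num)
  have hk' : ∀ x ∈ Icc 0 r, HasDerivWithinAt k (D x) (Icc 0 r) x := fun x hx =>
    ((hcd.differentiableOn (by norm_num)) x hx).hasDerivWithinAt
  have hD' : ∀ x ∈ Icc 0 r, HasDerivWithinAt D (derivWithin D (Icc 0 r) x) (Icc 0 r) x :=
    fun x hx => ((hDcd.differentiableOn one_ne_zero) x hx).hasDerivWithinAt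
  have hp := continuous_integratingFactor hb
  have hflux : ∀ x ∈ Icc 0 r, HasDerivWithinAt (fun t => p t * D t)
      (2 * lam * (p x * k x)) (Icc 0 r) x := fun x hx => by
    refine ((hasDerivAt_integratingFactor hb x).hasDerivWithinAt.mul (hD' x hx)).congr_deriv ?_
    linear_combination (2 * p x) * hode x hx
  have hD : EqOn D (volterraIntegrand lam p k) (Icc 0 r) := fun x hx => by
    have hPD := eq_add_integral_of_hasDerivWithinAt hflux
      (continuousOn_const.mul (hp.continuousOn.mul hcd.continuousOn)) hx
    have hp0 : p 0 = 1 := by simp [p, integratingFactor]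
    rw [hp0, h1, intervalIntegral.integral_const_mul] at hPD
    have hpx : p x ≠ 0 := (exp_pos _).ne'
    rw [volterraIntegrand, eq_div_iff hpx, mul_comm, hPD]
    ring
  intro x hx
  rw [eq_add_integral_of_hasDerivWithinAt hk' hDcd.continuousOn hx, h0, zero_add, volterra]
  exact integral_congr_of_eqOn_Icc hD hx

end IntegratingFactor

theorem SolPK.eqOn_of_eqOn_volterra {r lam : ℝ} {b k k' : ℝ → ℝ} (hk' : SolPK r lam b k')
    (hr : 0 < r) (hlam : 0 ≤ lam) (hb : Continuous b) (hk : Continuous k)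
    (hkW : EqOn k (volterra lam (integratingFactor b) k) (Icc 0 r)) : EqOn k' k (Icc 0 r) := by
  obtain ⟨g, hg, hgk'⟩ := hk'.1.continuousOn.exists_continuous_eqOn_Icc hr.le
  have hgW : EqOn g (volterra lam (integratingFactor b) g) (Icc 0 r) := fun x hx => by
    rw [hgk' hx, eqOn_volterra_of_solPK hr hb hk' hx, volterra_congr hgk'.symm hx]
  intro x hx
  rw [← hgk' hx]
  exact _root_.eqOn_of_eqOn_volterra hr.le hlam (isBoundedWeight_integratingFactor hb le_rfl)
    hg hgW hk hkW hx

noncomputable def limitSolution (lam α x : ℝ) : ℝ :=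
  exp (-2 * α) * sinh (√(2 * lam) * x) / √(2 * lam)

section LimitSolution

variable {lam α : ℝ}

lemma isBoundedWeight_const (r α : ℝ) :
    IsBoundedWeight r (exp (2 * |α|)) fun _ => exp (2 * α) where
  continuous := continuous_const
  pos _ := exp_pos _
  le _ _ := exp_le_exp.2 (by linarith [le_abs_self α])
  inv_le _ _ := by
    rw [← exp_neg]
    exact exp_le_exp.2 (by linarith [neg_abs_le α])

lemma hasDerivAt_limitSolution (hlam : 0 < lam) (x : ℝ) :
    HasDerivAt (limitSolution lam α) (exp (-2 * α) * cosh (√(2 * lam) * x)) x := by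
  have hc : √(2 * lam) ≠ 0 := (sqrt_pos.2 (by positivity)).ne'
  refine ((((hasDerivAt_id' x).const_mul √(2 * lam)).sinh.const_mul
    (exp (-2 * α))).div_const √(2 * lam)).congr_deriv ?_
  field_simp

lemma continuous_limitSolution (hlam : 0 < lam) : Continuous (limitSolution lam α) :=
  continuous_iff_continuousAt.2 fun x => (hasDerivAt_limitSolution hlam x).continuousAt

lemma integral_limitSolution (hlam : 0 < lam) (x : ℝ) :
    ∫ u in (0:ℝ)..x, limitSolution lam α u
      = exp (-2 * α) * (cosh (√(2 * lam) * x) - 1) / (2 * lam) := by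
  have hc : √(2 * lam) ≠ 0 := (sqrt_pos.2 (by positivity)).ne'
  have hc2 : √(2 * lam) ^ 2 = 2 * lam := sq_sqrt (by positivity)
  have hF : ∀ u, HasDerivAt (fun u => exp (-2 * α) * (cosh (√(2 * lam) * u) - 1) / (2 * lam))
      (limitSolution lam α u) u := fun u => by
    refine (((((hasDerivAt_id' u).const_mul √(2 * lam)).cosh.sub_const 1).const_mul
      (exp (-2 * α))).div_const (2 * lam)).congr_deriv ?_
    rw [limitSolution]
    field_simp
    rw [hc2]
  rw [intervalIntegral.integral_eq_sub_of_hasDerivAt (fun u _ => hF u)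
    ((continuous_limitSolution hlam).intervalIntegrable _ _)]
  simp

lemma volterraIntegrand_limitSolution (hlam : 0 < lam) (s : ℝ) :
    volterraIntegrand lam (fun _ => exp (2 * α)) (limitSolution lam α) s
      = exp (-2 * α) * cosh (√(2 * lam) * s) := by
  rw [volterraIntegrand, intervalIntegral.integral_const_mul, integral_limitSolution hlam,
    show -2 * α = -(2 * α) by ring, exp_neg]
  field_simp
  ring

lemma limitSolution_eq_volterra (hlam : 0 < lam) (x : ℝ) :
    limitSolution lam α x = volterra lam (fun _ => exp (2 * α)) (limitSolution lam α) x := by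
  rw [volterra, funext (volterraIntegrand_limitSolution hlam),
    intervalIntegral.integral_eq_sub_of_hasDerivAt (fun u _ => hasDerivAt_limitSolution hlam u)
      ((by fun_prop : Continuous fun s => exp (-2 * α) * cosh (√(2 * lam) * s)).intervalIntegrable
        _ _)]
  simp [limitSolution]

end LimitSolution

/-- existence and uniqueness of the solutions `k_ε` of
`(1/2)k'' + a_ε k' = λk`, `k(0)=0`, `k'(0)=1` on `[0,r]`, their uniform convergence as
`ε → 0+` to `x ↦ e^{−2α} sinh(√(2λ)x)/√(2λ)`, and the pointwise convergence of the
derivatives `k_ε'(x) → e^{−2α} cosh(√(2λ)x)` on `(0,r]`. -/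
theorem stmt10 (r lam α : ℝ) (hr : 0 < r) (hlam : 0 < lam)
    (a : ℝ → ℝ → ℝ)
    (hacont : ∀ ε > (0:ℝ), ContinuousOn (a ε) (Icc 0 r))
    (haM : ∃ M : ℝ, ∀ ε > (0:ℝ), ∫ u in (0:ℝ)..r, |a ε u| ≤ M)
    (hlim : ∀ y z : ℝ, 0 ≤ y → y < z → z ≤ r →
      Tendsto (fun ε => ∫ u in y..z, a ε u) (𝓝[>] (0:ℝ))
        (𝓝 (α * (if y = 0 then 1 else 0)))) :
    ∃ K : ℝ → ℝ → ℝ,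
      (∀ ε > (0:ℝ), SolPK r lam (a ε) (K ε) ∧
        (∀ k', SolPK r lam (a ε) k' → EqOn k' (K ε) (Icc 0 r))) ∧
      TendstoUniformlyOn (fun ε x => K ε x)
        (fun x => Real.exp (-2 * α) * Real.sinh (Real.sqrt (2 * lam) * x) /
          Real.sqrt (2 * lam))
        (𝓝[>] (0:ℝ)) (Icc 0 r) ∧
      (∀ x ∈ Ioc 0 r,
        Tendsto (fun ε => derivWithin (K ε) (Icc 0 r) x) (𝓝[>] (0:ℝ))
          (𝓝 (Real.exp (-2 * α) * Real.cosh (Real.sqrt (2 * lam) * x)))) := by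
  obtain ⟨M, hM⟩ := haM
  have hpos : ∀ᶠ ε in 𝓝[>] (0:ℝ), 0 < ε := self_mem_nhdsWithin
  choose! b hb hba using fun ε (hε : 0 < ε) => (hacont ε hε).exists_continuous_eqOn_Icc hr.le
  have hweight : ∀ ε > 0, IsBoundedWeight r (exp (2 * M)) (integratingFactor (b ε)) :=
    fun ε hε => isBoundedWeight_integratingFactor (hb ε hε) <| (integral_congr_of_eqOn_Icc
      (fun u hu => congrArg abs (hba ε hε hu)) (right_mem_Icc.2 hr.le)).trans_le (hM ε hε)
  have hweight_lim : ∀ x ∈ Ioc 0 r, Tendsto (fun ε => integratingFactor (b ε) x) (𝓝[>] 0)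
      (𝓝 (exp (2 * α))) := fun x hx => by
    have h := hlim 0 x le_rfl hx.1 hx.2
    rw [if_pos rfl, mul_one] at h
    refine ((continuous_exp.tendsto _).comp (h.const_mul 2)).congr' (hpos.mono fun ε hε => ?_)
    simp only [Function.comp_apply, integratingFactor,
      integral_congr_of_eqOn_Icc (hba ε hε) (Ioc_subset_Icc_self hx)]
  choose! K hK hKW using fun ε (hε : 0 < ε) =>
    exists_continuous_eqOn_volterra hr.le hlam.le (hweight ε hε)
  have hsol := fun ε hε => solPK_of_eqOn_volterra hr (hb ε hε) (hK ε hε) (hKW ε hε)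
  have hunif := tendstoUniformlyOn_of_eqOn_volterra hr.le hlam.le (hpos.mono hweight)
    (isBoundedWeight_const r α) hweight_lim (hpos.mono fun ε hε => ⟨hK ε hε, hKW ε hε⟩)
    (continuous_limitSolution hlam) fun x _ => limitSolution_eq_volterra hlam x
  refine ⟨K, fun ε hε => ⟨(hsol ε hε).1.congr_coeff (hba ε hε), fun k' hk' =>
    (hk'.congr_coeff (hba ε hε).symm).eqOn_of_eqOn_volterra hr hlam.le (hb ε hε) (hK ε hε)
      (hKW ε hε)⟩, hunif, fun x hx => ?_⟩
  have hderiv := tendsto_volterraIntegrand_of_tendstoUniformlyOn hlam.le (hpos.mono hweight)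
    hweight_lim (hpos.mono hK) (continuous_limitSolution hlam) hunif hx (exp_pos _).ne'
  rw [volterraIntegrand_limitSolution hlam] at hderiv
  exact hderiv.congr' (hpos.mono fun ε hε => ((hsol ε hε).2 (Ioc_subset_Icc_self hx)).symm)
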